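/- Let m ≥ 1, u ≥ 1, j, j' be integers with 0 ≤ j ≤ m, 0 ≤ j' ≤ um, and j' ≡ j (mod 2). Then −φ(m,j,(j'−j)/2) = min( −φ(m,j,−(j'+j)/2 − 1), u − φ(m,j,−(j'+j)/2 + 1) ) holds if and only if one of the following three conditions is satisfied: (A1) m > 1 and j' ≤ j − 2; (B1) m > 1, u is even, and j' ≥ um − j + 1; (C1) m > 1, u is odd, and j' ≥ m(u−1) + j + 2. -/

import Mathlib

/-- The δ-coefficient function `φ(m,j,k)` for type `A₁⁽¹⁾`: writing `k = m*q + r` by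
Euclidean division (`0 ≤ r < m` when `1 ≤ m`), set `φ(m,j,k) = -q*(k+r+j) - r` if
`0 ≤ r ≤ m - j`, and `φ(m,j,k) = -q*(k+r+j) + m - j - 2*r` if `m - j ≤ r < m`
(the two expressions agree at `r = m - j`). -/
def phi (m j k : ℤ) : ℤ :=
  -(k.ediv m) * (k + k.emod m + j) +
    (if k.emod m ≤ m - j then -(k.emod m) else m - j - 2 * (k.emod m))

/-! Writing `k = m q + r`, `φ(m,j,k)` is `-q (m q + 2 r + j)` plus a term depending only on `r`,
and this formula stays valid at `r = m`. It yields the symmetry `φ(m,j,-j-k) = φ(m,j,k)` and the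
increment `φ(m,j,d) - φ(m,j,d+1) = δ(d) := ⌊d/m⌋ + ⌊(d+j)/m⌋ + 1` (`phiStep`).
For `d = (j'-j)/2` the symmetry turns the three arguments into `d`, `d+1`, `d-1`, so the equation
says `min(δ(d), u - δ(d-1)) = 0`, where both entries are nonnegative. As `⌊(d+j)/m⌋ - ⌊d/m⌋ ∈ {0,1}`,
the value of `δ` pins down both floors, and `δ(d) = 0`, `δ(d-1) = u` become (A1) and (B1)/(C1). -/

def phiRem (m j r : ℤ) : ℤ :=
  if r ≤ m - j then -r else m - j - 2 * r

def phiStep (m j d : ℤ) : ℤ :=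
  d / m + (d + j) / m + 1

section
variable {m j : ℤ}

lemma phi_eq_phiRem (k : ℤ) : phi m j k = -(k / m) * (k + k % m + j) + phiRem m j (k % m) :=
  rfl

lemma phi_mul_add_of_lt {q r : ℤ} (hr0 : 0 ≤ r) (hrm : r < m) :
    phi m j (m * q + r) = -q * (m * q + 2 * r + j) + phiRem m j r := by
  rw [phi_eq_phiRem, Int.mul_add_ediv_left q r (by omega), Int.ediv_eq_zero_of_lt hr0 hrm,
    Int.mul_add_emod_self_left, Int.emod_eq_of_lt hr0 hrm]
  ring

lemma phi_mul_add (hm : 0 < m) (hj0 : 0 ≤ j) (hjm : j ≤ m) {q r : ℤ} (hr0 : 0 ≤ r) (hrm : r ≤ m) :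
    phi m j (m * q + r) = -q * (m * q + 2 * r + j) + phiRem m j r := by
  rcases hrm.lt_or_eq with hrm | hrm
  · exact phi_mul_add_of_lt hr0 hrm
  rw [hrm, show m * q + m = m * (q + 1) + 0 by ring, phi_mul_add_of_lt le_rfl (by omega)]
  unfold phiRem
  split_ifs <;> linarith

lemma phiRem_sub_phiRem_add_one (hj0 : 0 ≤ j) (hjm : j ≤ m) {r : ℤ} (hr0 : 0 ≤ r) (hrm : r < m) :
    phiRem m j r - phiRem m j (r + 1) = (r + j) / m + 1 := by
  have hrj : (r + j) / m = if r + j < m then 0 else 1 := by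
    split_ifs with h
    · exact Int.ediv_eq_zero_of_lt (by omega) h
    · rw [show r + j = r + j - m + m * 1 by ring, Int.add_mul_ediv_left _ _ (by omega),
        Int.ediv_eq_zero_of_lt (by omega) (by omega), zero_add]
  rw [hrj]
  unfold phiRem
  split_ifs <;> omega

lemma exists_eq_mul_add (hm : 0 < m) (k : ℤ) : ∃ q r, 0 ≤ r ∧ r < m ∧ k = m * q + r :=
  ⟨k / m, k % m, Int.emod_nonneg k hm.ne', Int.emod_lt_of_pos k hm,
    (Int.mul_ediv_add_emod k m).symm⟩

theorem phi_sub_phi_add_one (hm : 0 < m) (hj0 : 0 ≤ j) (hjm : j ≤ m) (d : ℤ) :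
    phi m j d - phi m j (d + 1) = phiStep m j d := by
  obtain ⟨q, r, hr0, hrm, rfl⟩ := exists_eq_mul_add hm d
  rw [add_assoc, phi_mul_add_of_lt hr0 hrm, phi_mul_add hm hj0 hjm (by omega) hrm, phiStep,
    show m * q + r + j = m * q + (r + j) by ring, Int.mul_add_ediv_left _ _ hm.ne',
    Int.mul_add_ediv_left _ _ hm.ne', Int.ediv_eq_zero_of_lt hr0 hrm]
  linear_combination phiRem_sub_phiRem_add_one hj0 hjm hr0 hrm

theorem phi_neg_sub (hm : 0 < m) (hj0 : 0 ≤ j) (hjm : j ≤ m) (k : ℤ) :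
    phi m j (-j - k) = phi m j k := by
  obtain ⟨q, r, hr0, hrm, rfl⟩ := exists_eq_mul_add hm k
  rw [phi_mul_add_of_lt hr0 hrm]
  rcases le_or_gt (r + j) m with h | h
  · rw [show -j - (m * q + r) = m * (-q - 1) + (m - j - r) by ring,
      phi_mul_add hm hj0 hjm (by omega) (by omega)]
    unfold phiRem
    split_ifs <;> linarith
  · rw [show -j - (m * q + r) = m * (-q - 2) + (2 * m - j - r) by ring,
      phi_mul_add hm hj0 hjm (by omega) (by omega)]
    unfold phiRem
    split_ifs <;> linarith

lemma ediv_add_le_ediv_add_one (hm : 0 < m) {a b : ℤ} (hb : b ≤ m) : (a + b) / m ≤ a / m + 1 := by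
  calc (a + b) / m ≤ (a + m * 1) / m := Int.ediv_le_ediv hm (by omega)
    _ = a / m + 1 := Int.add_mul_ediv_left _ _ hm.ne'

lemma phiStep_eq_two_mul_iff (hm : 0 < m) (hj0 : 0 ≤ j) (hjm : j ≤ m) {d v : ℤ} :
    phiStep m j d = 2 * v ↔ d < v * m ∧ v * m ≤ d + j := by
  rw [phiStep, ← Int.ediv_lt_iff_lt_mul hm, ← Int.le_ediv_iff_mul_le hm]
  have := Int.ediv_le_ediv hm (show d ≤ d + j by omega)
  have := ediv_add_le_ediv_add_one (a := d) hm hjm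
  omega

lemma phiStep_eq_two_mul_add_one_iff (hm : 0 < m) (hj0 : 0 ≤ j) (hjm : j ≤ m) {d v : ℤ} :
    phiStep m j d = 2 * v + 1 ↔ v * m ≤ d ∧ d + j < (v + 1) * m := by
  rw [phiStep, ← Int.ediv_lt_iff_lt_mul hm, ← Int.le_ediv_iff_mul_le hm]
  have := Int.ediv_le_ediv hm (show d ≤ d + j by omega)
  have := ediv_add_le_ediv_add_one (a := d) hm hjm
  omega

lemma phiStep_nonneg (hm : 0 < m) {d : ℤ} (hd : -m ≤ d) (hdj : 0 ≤ d + j) : 0 ≤ phiStep m j d := by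
  have := (Int.le_ediv_iff_mul_le hm).2 (show -1 * m ≤ d by omega)
  have := Int.ediv_nonneg hdj hm.le
  unfold phiStep
  omega

lemma phiStep_le (hm : 0 < m) {d c : ℤ} (h : 2 * d + j < c * m) : phiStep m j d ≤ c := by
  have := Int.ediv_mul_le d hm.ne'
  have := Int.ediv_mul_le (d + j) hm.ne'
  have : (d / m + (d + j) / m) * m < c * m := by linarith
  unfold phiStep
  have := lt_of_mul_lt_mul_right this hm.le
  omega

lemma phiStep_eq_zero_iff (hm : 0 < m) (hj0 : 0 ≤ j) (hjm : j ≤ m) {d j' : ℤ} (hj'0 : 0 ≤ j')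
    (hd : j' - j = 2 * d) : phiStep m j d = 0 ↔ 1 < m ∧ j' ≤ j - 2 := by
  rw [← mul_zero (2 : ℤ), phiStep_eq_two_mul_iff hm hj0 hjm, zero_mul]
  omega

lemma phiStep_sub_one_eq_iff (hm : 0 < m) (hj0 : 0 ≤ j) (hjm : j ≤ m) {d j' u : ℤ}
    (hj'um : j' ≤ u * m) (hd : j' - j = 2 * d) :
    phiStep m j (d - 1) = u ↔
      (1 < m ∧ Even u ∧ u * m - j + 1 ≤ j') ∨ (1 < m ∧ Odd u ∧ m * (u - 1) + j + 2 ≤ j') := by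
  simp only [Int.even_iff, Int.odd_iff]
  obtain ⟨v, rfl | rfl⟩ := Int.even_or_odd' u
  · have : m * (2 * v - 1) = 2 * (v * m) - m := by ring
    have : 2 * v * m = 2 * (v * m) := by ring
    rw [phiStep_eq_two_mul_iff hm hj0 hjm]
    omega
  · have : m * (2 * v + 1 - 1) = 2 * (v * m) := by ring
    have : (2 * v + 1) * m = 2 * (v * m) + m := by ring
    have : (v + 1) * m = v * m + m := by ring
    rw [phiStep_eq_two_mul_add_one_iff hm hj0 hjm]
    omega

end

theorem phi_min_equality_iff_general (m u j j' : ℤ) (hm : 1 ≤ m)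
    (hj0 : 0 ≤ j) (hjm : j ≤ m) (hj'0 : 0 ≤ j') (hj'um : j' ≤ u * m)
    (hpar : 2 ∣ j' - j) :
    (-phi m j ((j' - j) / 2) =
        min (-phi m j (-((j' + j) / 2) - 1)) (u - phi m j (-((j' + j) / 2) + 1))) ↔
      (1 < m ∧ j' ≤ j - 2) ∨
      (1 < m ∧ Even u ∧ u * m - j + 1 ≤ j') ∨
      (1 < m ∧ Odd u ∧ m * (u - 1) + j + 2 ≤ j') := by
  have hm0 : 0 < m := hm
  obtain ⟨d, hd⟩ := hpar
  rw [show (j' - j) / 2 = d by omega, show -((j' + j) / 2) - 1 = -j - (d + 1) by omega,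
    show -((j' + j) / 2) + 1 = -j - (d - 1) by omega, phi_neg_sub hm0 hj0 hjm,
    phi_neg_sub hm0 hj0 hjm]
  have hstep := phi_sub_phi_add_one hm0 hj0 hjm d
  have hstep_pred := phi_sub_phi_add_one hm0 hj0 hjm (d - 1)
  rw [sub_add_cancel] at hstep_pred
  have hstep_nonneg := phiStep_nonneg (j := j) hm0 (d := d) (by omega) (by omega)
  have hstep_pred_le := phiStep_le (j := j) hm0 (d := d - 1) (c := u) (by omega)
  -- the equation now reads `min (phiStep m j d) (u - phiStep m j (d - 1)) = 0`, both entries `≥ 0`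
  rw [← phiStep_eq_zero_iff hm0 hj0 hjm hj'0 hd, ← phiStep_sub_one_eq_iff hm0 hj0 hjm hj'um hd]
  omega

/-- Proposition 4.5 of the paper: for `m, u ≥ 1`, `0 ≤ j ≤ m`, `0 ≤ j' ≤ um`,
`j' ≡ j (mod 2)`, equality
`−φ(m,j,(j'−j)/2) = min(−φ(m,j,−(j'+j)/2 − 1), u − φ(m,j,−(j'+j)/2 + 1))`
holds iff (A1) `m > 1` and `j' ≤ j − 2`, or (B1) `m > 1`, `u` even and
`j' ≥ um − j + 1`, or (C1) `m > 1`, `u` odd and `j' ≥ m(u−1) + j + 2`. -/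
theorem phi_min_equality_iff (m u j j' : ℤ) (hm : 1 ≤ m) (hu : 1 ≤ u)
    (hj0 : 0 ≤ j) (hjm : j ≤ m) (hj'0 : 0 ≤ j') (hj'um : j' ≤ u * m)
    (hpar : 2 ∣ j' - j) :
    (-phi m j ((j' - j) / 2) =
        min (-phi m j (-((j' + j) / 2) - 1)) (u - phi m j (-((j' + j) / 2) + 1))) ↔
      (1 < m ∧ j' ≤ j - 2) ∨
      (1 < m ∧ Even u ∧ u * m - j + 1 ≤ j') ∨
      (1 < m ∧ Odd u ∧ m * (u - 1) + j + 2 ≤ j') :=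
  phi_min_equality_iff_general m u j j' hm hj0 hjm hj'0 hj'um hpar
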